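/- For every complex number s with Re s > 1, the integral ∫_1^∞ S_0(t)·t^{−s−1} dt converges and s·∫_1^∞ S_0(t)·t^{−s−1} dt = −(1 + 2^{1−s})·ζ(2s)/ζ(s). -/

import Mathlib

open ArithmeticFunction
open scoped ArithmeticFunction.Omega

/-- `S₀ t = ∑_{n ≤ t} (-1)^{n-Ω(n)}`, the sum being over positive integers
`n ≤ t`, where `Ω n` is the number of prime factors of `n` counted with
multiplicity. -/
noncomputable def S0 (t : ℝ) : ℤ :=
  ∑ n ∈ Finset.Icc 1 ⌊t⌋₊, (-1 : ℤ) ^ (n - Ω n)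

/-!
Write `a n = (-1) ^ (n - Ω n)`, so that `S₀` is the summatory function of `a`. Abel summation
turns `s ∫₁^∞ S₀(t) t^(-s-1) dt` into the Dirichlet series `L(a, s)`, which converges absolutely
since `|a n| = 1`. Now `a n = (-1)^n λ(n)` with `λ` the Liouville function, and `λ(2m) = -λ(m)`,
so splitting into even and odd `n` gives `L(a, s) = -(1 + 2^(1-s)) L(λ, s)`. Finally
`∑_{d ∣ n} λ(d)` is `1` when `n` is a square and `0` otherwise (compare at prime powers), so
`L(λ, s) ζ(s) = ζ(2s)`.
-/

open LSeries MeasureTheory Set Filter Asymptotics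
open scoped ArithmeticFunction.zeta LSeries.notation

namespace Nat

theorem Coprime.isSquare_mul_iff {m n : ℕ} (h : m.Coprime n) :
    IsSquare (m * n) ↔ IsSquare m ∧ IsSquare n := by
  refine ⟨fun ⟨c, hc⟩ => ?_, fun ⟨hm, hn⟩ => hm.mul hn⟩
  have hc2 : m * n = c ^ 2 := by rw [hc, sq]
  obtain ⟨a, rfl⟩ := exists_eq_pow_of_mul_eq_pow (Nat.isUnit_iff.mpr h) hc2
  obtain ⟨b, rfl⟩ :=
    exists_eq_pow_of_mul_eq_pow (Nat.isUnit_iff.mpr h.symm) ((mul_comm _ _).trans hc2)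
  exact ⟨⟨a, sq a⟩, ⟨b, sq b⟩⟩

theorem Prime.isSquare_pow_iff {p k : ℕ} (hp : p.Prime) : IsSquare (p ^ k) ↔ Even k := by
  refine ⟨fun ⟨c, hc⟩ => ?_, fun ⟨j, hj⟩ => ⟨p ^ j, by rw [hj, pow_add]⟩⟩
  obtain ⟨j, -, rfl⟩ := (Nat.dvd_prime_pow hp).mp (Dvd.intro c hc.symm)
  rw [← pow_add] at hc
  exact ⟨j, Nat.pow_right_injective hp.two_le hc⟩

end Nat

namespace ArithmeticFunction

theorem cardFactors_le_self (n : ℕ) : Ω n ≤ n := by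
  rcases eq_or_ne n 0 with rfl | hn
  · simp
  calc Ω n ≤ 2 ^ Ω n := Nat.lt_two_pow_self.le
    _ ≤ n.primeFactorsList.prod := List.pow_card_le_prod _ _ fun _ hp =>
        (Nat.prime_of_mem_primeFactorsList hp).two_le
    _ = n := Nat.prod_primeFactorsList hn

theorem neg_one_pow_sub_cardFactors {n : ℕ} (hn : n ≠ 0) :
    (-1 : ℤ) ^ (n - Ω n) = (-1) ^ n * liouville n := by
  have hsplit : (-1 : ℤ) ^ n = (-1) ^ (n - Ω n) * (-1) ^ Ω n := by
    rw [← pow_add, Nat.sub_add_cancel (cardFactors_le_self n)]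
  rw [liouville_apply hn, hsplit, mul_assoc, ← mul_pow, neg_one_mul, neg_neg, one_pow, mul_one]

theorem liouville_two_mul (n : ℕ) : liouville (2 * n) = -liouville n := by
  rw [liouville_apply_mul, liouville_apply two_ne_zero, cardFactors_apply_prime Nat.prime_two,
    pow_one, neg_one_mul]

def squareIndicator : ArithmeticFunction ℤ :=
  ⟨fun n => if n ≠ 0 ∧ IsSquare n then 1 else 0, by simp⟩

theorem squareIndicator_apply {n : ℕ} (hn : n ≠ 0) :
    squareIndicator n = if IsSquare n then 1 else 0 := by
  simp [squareIndicator, hn]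

theorem isMultiplicative_squareIndicator : squareIndicator.IsMultiplicative := by
  refine ⟨by simp [squareIndicator_apply], fun {m n} hmn => ?_⟩
  rcases eq_or_ne m 0 with rfl | hm
  · simp [squareIndicator]
  rcases eq_or_ne n 0 with rfl | hn
  · simp [squareIndicator]
  simp only [squareIndicator_apply hm, squareIndicator_apply hn,
    squareIndicator_apply (mul_ne_zero hm hn), hmn.isSquare_mul_iff, ite_zero_mul_ite_zero, mul_one]

theorem liouville_mul_zeta : liouville * ζ = squareIndicator := by
  refine (IsMultiplicative.eq_iff_eq_on_prime_powers _
    (isMultiplicative_liouville.mul isMultiplicative_zeta.natCast) _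
    isMultiplicative_squareIndicator).mpr fun p k hp => ?_
  have hlp (i : ℕ) : liouville (p ^ i) = (-1) ^ i := by
    rw [liouville_apply (pow_ne_zero _ hp.ne_zero), cardFactors_apply_prime_pow hp]
  rw [coe_mul_zeta_apply, Nat.sum_divisors_prime_pow hp, Finset.sum_congr rfl fun i _ => hlp i,
    neg_one_geom_sum, squareIndicator_apply (pow_ne_zero _ hp.ne_zero)]
  simp only [hp.isSquare_pow_iff, Nat.even_add_one, ite_not]

end ArithmeticFunction

theorem LSeries_squareIndicator (s : ℂ) : L ↗squareIndicator s = L 1 (2 * s) := by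
  have hsupport : Function.support (term ↗squareIndicator s) ⊆ range (· ^ 2) := by
    intro n hn
    rcases eq_or_ne n 0 with rfl | hn0
    · exact ⟨0, rfl⟩
    by_contra hsq
    refine hn ?_
    rw [term_of_ne_zero hn0, squareIndicator_apply hn0,
      if_neg fun ⟨r, hr⟩ => hsq ⟨r, hr ▸ sq r⟩, Int.cast_zero, zero_div]
  have hterm (m : ℕ) : term ↗squareIndicator s (m ^ 2) = term 1 (2 * s) m := by
    rcases eq_or_ne m 0 with rfl | hm
    · simp
    rw [term_of_ne_zero (pow_ne_zero 2 hm), term_of_ne_zero hm,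
      squareIndicator_apply (pow_ne_zero 2 hm), if_pos ⟨m, sq m⟩, Pi.one_apply, Int.cast_one,
      Nat.cast_pow, ← Complex.natCast_cpow_natCast_mul]
    norm_cast
  rw [LSeries, LSeries, ← (Nat.pow_left_injective two_ne_zero).tsum_eq hsupport]
  exact tsum_congr hterm

theorem LSeriesSummable_liouville {s : ℂ} (hs : 1 < s.re) : LSeriesSummable ↗liouville s :=
  LSeriesSummable_of_bounded_of_one_lt_re (m := 1) (fun n hn => by simp [liouville_apply hn]) hs

theorem LSeries_liouville {s : ℂ} (hs : 1 < s.re) :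
    L ↗liouville s = riemannZeta (2 * s) / riemannZeta s := by
  have hconv :=
    LSeries_convolution' (LSeriesSummable_liouville hs) (LSeriesSummable_zeta_iff.mpr hs)
  rw [LSeries_zeta_eq_riemannZeta hs] at hconv
  rw [eq_div_iff (riemannZeta_ne_zero_of_one_lt_re hs), ← hconv,
    ← LSeries_one_eq_riemannZeta (by simp; linarith), ← LSeries_squareIndicator,
    ← liouville_mul_zeta]
  congr 1
  ext n
  simp only [← intCoe_apply (R := ℂ), ← natCoe_apply (R := ℂ), coe_mul, intCoe_mul, coe_coe]

theorem LSeries.term_two_mul (f : ℕ → ℂ) (s : ℂ) (n : ℕ) :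
    term f s (2 * n) = 2 ^ (-s) * term (fun n => f (2 * n)) s n := by
  rcases eq_or_ne n 0 with rfl | hn
  · simp
  rw [term_of_ne_zero (mul_ne_zero two_ne_zero hn), term_of_ne_zero hn, Nat.cast_mul,
    Complex.natCast_mul_natCast_cpow, Complex.cpow_neg]
  push_cast
  ring

theorem LSeries.term_neg_one_pow_mul (f : ℕ → ℂ) (s : ℂ) (n : ℕ) :
    term (fun n => (-1) ^ n * f n) s n = (-1) ^ n * term f s n := by
  rcases eq_or_ne n 0 with rfl | hn
  · simp
  rw [term_of_ne_zero hn, term_of_ne_zero hn, mul_div_assoc]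

theorem LSeries_neg_one_pow_mul {f : ℕ → ℂ} {s : ℂ} (hf : LSeriesSummable f s) :
    L (fun n => (-1) ^ n * f n) s = 2 ^ (1 - s) * L (fun n => f (2 * n)) s - L f s := by
  have heven : Summable fun k => term f s (2 * k) :=
    hf.comp_injective (mul_right_injective₀ two_ne_zero)
  have hodd : Summable fun k => term f s (2 * k + 1) :=
    hf.comp_injective ((add_left_injective 1).comp (mul_right_injective₀ two_ne_zero))
  have hsign_even (k : ℕ) : term (fun n => (-1) ^ n * f n) s (2 * k) = term f s (2 * k) := by
    rw [term_neg_one_pow_mul, pow_mul, neg_one_sq, one_pow, one_mul]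
  have hsign_odd (k : ℕ) :
      term (fun n => (-1) ^ n * f n) s (2 * k + 1) = -term f s (2 * k + 1) := by
    rw [term_neg_one_pow_mul, pow_succ, pow_mul, neg_one_sq, one_pow, one_mul, neg_one_mul]
  calc L (fun n => (-1) ^ n * f n) s
      = ∑' k, term f s (2 * k) - ∑' k, term f s (2 * k + 1) := by
        rw [LSeries, ← tsum_even_add_odd (by simpa only [hsign_even] using heven)
          (by simpa only [hsign_odd] using hodd.neg)]
        simp only [hsign_even, hsign_odd, tsum_neg, sub_eq_add_neg]
    _ = 2 * ∑' k, term f s (2 * k) - L f s := by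
        rw [LSeries, ← tsum_even_add_odd heven hodd]
        ring
    _ = 2 ^ (1 - s) * L (fun n => f (2 * n)) s - L f s := by
        simp only [term_two_mul, tsum_mul_left, LSeries, Complex.cpow_sub _ _ two_ne_zero,
          Complex.cpow_one, Complex.cpow_neg, div_eq_mul_inv, mul_assoc]

theorem LSeries_liouville_two_mul (s : ℂ) :
    L (fun n => ↗liouville (2 * n)) s = -L ↗liouville s := by
  rw [← LSeries_neg]
  congr 1
  ext n
  simp [liouville_two_mul]

section PartialSums

variable {f : ℕ → ℂ} {C : ℝ}

theorem sum_Icc_norm_le (hf : ∀ n, ‖f n‖ ≤ C) (n : ℕ) :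
    ∑ k ∈ Finset.Icc 1 n, ‖f k‖ ≤ C * n :=
  calc ∑ k ∈ Finset.Icc 1 n, ‖f k‖ ≤ ∑ k ∈ Finset.Icc 1 n, C := Finset.sum_le_sum fun k _ => hf k
    _ = C * n := by simp [mul_comm]

theorem norm_sum_Icc_floor_le (hf : ∀ n, ‖f n‖ ≤ C) {t : ℝ} (ht : 0 ≤ t) :
    ‖∑ k ∈ Finset.Icc 1 ⌊t⌋₊, f k‖ ≤ C * t :=
  (norm_sum_le _ _).trans <| (sum_Icc_norm_le hf _).trans <|
    mul_le_mul_of_nonneg_left (Nat.floor_le ht) ((norm_nonneg _).trans (hf 0))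

theorem integrableOn_sum_Icc_floor_mul_cpow (hf : ∀ n, ‖f n‖ ≤ C) {s : ℂ} (hs : 1 < s.re) :
    IntegrableOn (fun t : ℝ => (∑ k ∈ Finset.Icc 1 ⌊t⌋₊, f k) * (t : ℂ) ^ (-s - 1)) (Ioi 1) := by
  have hdom : IntegrableOn (fun t : ℝ => C * t ^ (-s.re)) (Ioi 1) :=
    (integrableOn_Ioi_rpow_of_lt (by linarith) one_pos).const_mul C
  have hsum_meas : Measurable fun t : ℝ => ∑ k ∈ Finset.Icc 1 ⌊t⌋₊, f k :=
    (measurable_from_top (f := fun n => ∑ k ∈ Finset.Icc 1 n, f k)).comp Nat.measurable_floor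
  have hcpow_cont : ContinuousOn (fun t : ℝ => (t : ℂ) ^ (-s - 1)) (Ioi 1) := fun t ht =>
    (Complex.continuousAt_ofReal_cpow_const t _
      (Or.inr (zero_lt_one.trans ht).ne')).continuousWithinAt
  refine hdom.mono' (hsum_meas.aestronglyMeasurable.mul
    (hcpow_cont.aestronglyMeasurable measurableSet_Ioi)) ?_
  filter_upwards [ae_restrict_mem measurableSet_Ioi] with t ht
  have ht0 : 0 < t := zero_lt_one.trans ht
  rw [norm_mul, Complex.norm_cpow_eq_rpow_re_of_pos ht0]
  calc ‖∑ k ∈ Finset.Icc 1 ⌊t⌋₊, f k‖ * t ^ (-s - 1).re ≤ C * t * t ^ (-s - 1).re :=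
        mul_le_mul_of_nonneg_right (norm_sum_Icc_floor_le hf ht0.le) (by positivity)
    _ = C * t ^ (-s.re) := by
        rw [mul_assoc, ← Real.rpow_one_add' ht0.le (by simp; linarith)]
        simp

theorem LSeries_eq_mul_integral_of_norm_le (hf : ∀ n, ‖f n‖ ≤ C) {s : ℂ} (hs : 1 < s.re) :
    L f s = s * ∫ t in Ioi (1 : ℝ), (∑ k ∈ Finset.Icc 1 ⌊t⌋₊, f k) * (t : ℂ) ^ (-s - 1) := by
  have hO : (fun n => ∑ k ∈ Finset.Icc 1 n, ‖f k‖) =O[atTop] fun n => (n : ℝ) ^ (1 : ℝ) := by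
    refine IsBigO.of_bound C (Eventually.of_forall fun n => ?_)
    rw [Real.rpow_one, Real.norm_natCast,
      Real.norm_of_nonneg (Finset.sum_nonneg fun k _ => norm_nonneg (f k))]
    exact sum_Icc_norm_le hf n
  simpa only [neg_add'] using LSeries_eq_mul_integral' f zero_le_one hs hO

end PartialSums

theorem LSeries_neg_one_pow_sub_cardFactors {s : ℂ} (hs : 1 < s.re) :
    L (fun n => (-1 : ℂ) ^ (n - Ω n)) s =
      -(1 + 2 ^ (1 - s)) * (riemannZeta (2 * s) / riemannZeta s) := by
  rw [LSeries_congr (g := fun n => (-1) ^ n * ↗liouville n)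
      (fun hn => by simpa using congrArg (Int.cast : ℤ → ℂ) (neg_one_pow_sub_cardFactors hn)),
    LSeries_neg_one_pow_mul (LSeriesSummable_liouville hs), LSeries_liouville_two_mul,
    LSeries_liouville hs]
  ring

theorem S0_mellin_transform (s : ℂ) (hs : 1 < s.re) :
    MeasureTheory.IntegrableOn (fun t : ℝ => (S0 t : ℂ) * (t : ℂ) ^ (-s - 1)) (Set.Ioi 1) ∧
    s * ∫ t in Set.Ioi (1 : ℝ), (S0 t : ℂ) * (t : ℂ) ^ (-s - 1) =
      -(1 + 2 ^ (1 - s)) * riemannZeta (2 * s) / riemannZeta s := by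
  have hS0 (t : ℝ) : (S0 t : ℂ) = ∑ k ∈ Finset.Icc 1 ⌊t⌋₊, (-1 : ℂ) ^ (k - Ω k) := by
    simp [S0]
  have hbound (n : ℕ) : ‖(-1 : ℂ) ^ (n - Ω n)‖ ≤ 1 := by simp
  simp only [hS0]
  refine ⟨integrableOn_sum_Icc_floor_mul_cpow hbound hs, ?_⟩
  rw [← LSeries_eq_mul_integral_of_norm_le hbound hs, LSeries_neg_one_pow_sub_cardFactors hs,
    mul_div_assoc]
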